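/- Let G = ⟨e₁,e₂⟩ ≅ ℤ², g ∈ {e₁, e₂, e₁e₂}, and let C be any subset of the set of commutators { [x_g, y₁^{(k₁)}, …, y_n^{(k_n)}] : n ≥ 0, k₁, …, k_n ≥ 0 }. Then there exist finitely many f₁, …, f_s ∈ C such that ⟨f₁, …, f_s⟩^{T_G} + Id_G(UT₃⁽⁻⁾, Γ(e₁,e₂)) = ⟨C⟩^{T_G} + Id_G(UT₃⁽⁻⁾, Γ(e₁,e₂)). -/

import Mathlib

open FreeLieAlgebra

attribute [local instance 100] LieRing.ofAssociativeRing

/-- The free `G`-graded Lie algebra over `K` on variables `x_{i,g}`, `i ∈ ℕ`, `g ∈ G`. -/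
abbrev FL (K : Type*) [Field K] (G : Type*) := FreeLieAlgebra K (ℕ × G)

section Framework

variable (K : Type*) [Field K] (G : Type*) [CommGroup G]

/-- `IsHom K G g a` : `a` is homogeneous of degree `g` in the free graded Lie algebra. -/
inductive IsHom : G → FL K G → Prop
  | var (i : ℕ) (g : G) : IsHom g (of K (i, g))
  | zero (g : G) : IsHom g 0
  | add {g : G} {a b : FL K G} : IsHom g a → IsHom g b → IsHom g (a + b)
  | smul {g : G} {a : FL K G} (c : K) : IsHom g a → IsHom g (c • a)
  | lie {g h : G} {a b : FL K G} : IsHom g a → IsHom h b → IsHom (g * h) ⁅a, b⁆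

/-- A graded substitution: an endomorphism sending each variable `x_{i,g}` to a homogeneous
element of degree `g`. -/
def IsGradedSubst (φ : FL K G →ₗ⁅K⁆ FL K G) : Prop :=
  ∀ (i : ℕ) (g : G), IsHom K G g (φ (of K (i, g)))

/-- A `T_G`-ideal: a Lie ideal invariant under all graded substitutions. -/
def IsTIdeal (I : LieIdeal K (FL K G)) : Prop :=
  ∀ φ : FL K G →ₗ⁅K⁆ FL K G, IsGradedSubst K G φ → ∀ a ∈ I, φ a ∈ I

/-- The `T_G`-ideal generated by a set `S`. -/
noncomputable def tClosure (S : Set (FL K G)) : LieIdeal K (FL K G) :=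
  sInf {I : LieIdeal K (FL K G) | IsTIdeal K G I ∧ S ⊆ ↑I}

/-- The graded polynomial identities of a `G`-graded Lie algebra `(A, Γ)`, as a Lie ideal of the
free graded Lie algebra. -/
def gradedIdeal (A : Type*) [LieRing A] [LieAlgebra K A] (Γ : G → Submodule K A) :
    LieIdeal K (FL K G) where
  carrier := {f | ∀ ψ : FL K G →ₗ⁅K⁆ A, (∀ (i : ℕ) (g : G), ψ (of K (i, g)) ∈ Γ g) → ψ f = 0}
  add_mem' := by
    intro a b ha hb ψ hψ
    rw [map_add ψ, ha ψ hψ, hb ψ hψ, add_zero]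
  zero_mem' := by
    intro ψ _
    exact ψ.map_zero
  smul_mem' := by
    intro c a ha ψ hψ
    rw [map_smul ψ, ha ψ hψ, smul_zero]
  lie_mem := by
    intro x m hm ψ hψ
    rw [ψ.map_lie, hm ψ hψ, lie_zero]

/-- Left-normed iterated commutator `[x, l₁, l₂, …]`. -/
noncomputable def lnorm (x : FL K G) (l : List (FL K G)) : FL K G := l.foldl (fun a b => ⁅a, b⁆) x

/-- The list `y₁^{(p₁)}, …, y_r^{(p_r)}` of trivial-degree variables with multiplicities
(0-indexed: the variables are `x_{0,1}, …, x_{r-1,1}`). -/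
noncomputable def yRun (p : ℕ → ℕ) : ℕ → List (FL K G)
  | 0 => []
  | n + 1 => yRun p n ++ List.replicate (p n) (of K (n, (1 : G)))

/-- 3×3 matrices. -/
abbrev M3 (K : Type*) [Field K] := Matrix (Fin 3) (Fin 3) K

/-- Matrix units. -/
def E3 (i j : Fin 3) : M3 K := Matrix.single i j 1

/-- The elementary grading `Γ(g,h)` on upper triangular 3×3 matrices:
`deg e₁₁ = deg e₂₂ = deg e₃₃ = 1`, `deg e₁₂ = g`, `deg e₂₃ = h`, `deg e₁₃ = gh`.  The component of
degree `l` is the span of the matrix units of degree `l`. -/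
def utGrading (g h : G) : G → Submodule K (M3 K) := fun l =>
  Submodule.span K {m : M3 K |
    (l = 1 ∧ (m = E3 K 0 0 ∨ m = E3 K 1 1 ∨ m = E3 K 2 2)) ∨
    (l = g ∧ m = E3 K 0 1) ∨ (l = h ∧ m = E3 K 1 2) ∨ (l = g * h ∧ m = E3 K 0 2)}

/-- The support of the grading `Γ(g,h)`. -/
def utSupp (g h : G) : Set G := {l | utGrading K G g h l ≠ ⊥}

/-- The graded identities `Id_G(UT₃⁽⁻⁾, Γ(g,h))`. -/
def IdUT3 (g h : G) : LieIdeal K (FL K G) := gradedIdeal K G (M3 K) (utGrading K G g h)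

/-- 2×2 matrices. -/
abbrev M2 (K : Type*) [Field K] := Matrix (Fin 2) (Fin 2) K

/-- Matrix units. -/
def E2 (i j : Fin 2) : M2 K := Matrix.single i j 1

/-- The space of upper triangular 2×2 matrices, `UT₂⁽⁻⁾`. -/
def ut2 : Submodule K (M2 K) := Submodule.span K {E2 K 0 0, E2 K 1 1, E2 K 0 1}

/-- Ordinary (ungraded) Lie polynomial identities of `UT₂⁽⁻⁾`. -/
def IdUT2 : Set (FL K G) :=
  {f | ∀ ψ : FL K G →ₗ⁅K⁆ M2 K, (∀ (i : ℕ) (g : G), ψ (of K (i, g)) ∈ ut2 K) → ψ f = 0}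

/-- The free Lie subalgebra `L(Y)` on the trivial-degree variables. -/
noncomputable def LY : LieSubalgebra K (FL K G) :=
  LieSubalgebra.lieSpan K (FL K G) {a | ∃ i : ℕ, a = of K (i, (1 : G))}

/-- Exponent bound: `0 ≤ p ℓ < |K|` when `K` is finite (no bound when `K` is infinite). -/
def expOK (r : ℕ) (p : ℕ → ℕ) : Prop := ∀ ℓ < r, Finite K → p ℓ < Nat.card K

end Framework

/-! ## Statement 4 : finite basis for sets of one-`x` commutators, universal grading -/

/-- The free abelian group of rank 2, `G = ⟨e₁, e₂⟩ ≅ ℤ²` (multiplicative notation). -/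
abbrev Gu : Type := Multiplicative (ℤ × ℤ)

/-- The first free generator. -/
def e1 : Gu := Multiplicative.ofAdd (1, 0)

/-- The second free generator. -/
def e2 : Gu := Multiplicative.ofAdd (0, 1)

/-!
Modulo `Id_G(UT₃⁽⁻⁾, Γ(e₁, e₂))` the variables `yᵢ` of trivial degree commute, because the
degree-`1` component of `UT₃⁽⁻⁾` is diagonal; hence `[x_g, y₀^{(k₀)}, …, y_{n-1}^{(k_{n-1})}]` only
depends on the multiset in which each `i` occurs `kᵢ` times. If the exponent sequence `k` is
dominated termwise by a subsequence of `k'`, the graded substitution relabelling the `yᵢ` along this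
embedding fixes `x_g` (as `g ≠ 1`), and bracketing its image with the missing `yᵢ` yields the
commutator for `k'` modulo the identities. By Higman's lemma this domination is a well-quasi-order,
and every subset of a well-quasi-ordered set is dominated by a finite subset.
-/

section LeftNormed

variable {K : Type*} [Field K] {G : Type*}

lemma lnorm_cons (x a : FL K G) (l : List (FL K G)) :
    lnorm K G x (a :: l) = lnorm K G ⁅x, a⁆ l := rfl

lemma lnorm_append (x : FL K G) (l l' : List (FL K G)) :
    lnorm K G x (l ++ l') = lnorm K G (lnorm K G x l) l' :=
  List.foldl_append

lemma lnorm_sub (x x' : FL K G) (l : List (FL K G)) :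
    lnorm K G (x - x') l = lnorm K G x l - lnorm K G x' l := by
  induction l generalizing x x' with
  | nil => rfl
  | cons a l ih => simp only [lnorm_cons, sub_lie, ih]

lemma map_lnorm (φ : FL K G →ₗ⁅K⁆ FL K G) (x : FL K G) (l : List (FL K G)) :
    φ (lnorm K G x l) = lnorm K G (φ x) (l.map φ) := by
  induction l generalizing x with
  | nil => rfl
  | cons a l ih => simp only [lnorm_cons, List.map_cons, ih, LieHom.map_lie]

lemma lnorm_mem {I : LieIdeal K (FL K G)} {x : FL K G} (hx : x ∈ I) (l : List (FL K G)) :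
    lnorm K G x l ∈ I := by
  induction l generalizing x with
  | nil => exact hx
  | cons a l ih => exact ih (lie_mem_left K _ I x a hx)

lemma lnorm_sub_lnorm_mem_of_perm {I : LieIdeal K (FL K G)} {l l' : List (FL K G)}
    (h : l.Perm l') (hcomm : ∀ a ∈ l, ∀ b ∈ l, ⁅a, b⁆ ∈ I) (x : FL K G) :
    lnorm K G x l - lnorm K G x l' ∈ I := by
  induction h generalizing x with
  | nil => simp
  | cons a _ ih =>
    exact ih (fun b hb c hc => hcomm b (.tail _ hb) c (.tail _ hc)) _
  | swap a b l =>
    have hjacobi : ⁅⁅x, b⁆, a⁆ - ⁅⁅x, a⁆, b⁆ = ⁅x, ⁅b, a⁆⁆ := by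
      rw [leibniz_lie, ← lie_skew ⁅x, a⁆ b]
      abel
    rw [lnorm_cons, lnorm_cons, lnorm_cons, lnorm_cons, ← lnorm_sub, hjacobi]
    exact lnorm_mem (lie_mem_right K _ I x _ (hcomm b (by simp) a (by simp))) l
  | trans h₁₂ _ ih₁₂ ih₂₃ =>
    simpa using add_mem (ih₁₂ hcomm x)
      (ih₂₃ (fun a ha b hb => hcomm a (h₁₂.mem_iff.2 ha) b (h₁₂.mem_iff.2 hb)) x)

end LeftNormed

noncomputable def yVar (K : Type*) [Field K] (G : Type*) [One G] (i : ℕ) : FL K G :=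
  of K (i, 1)

section TIdeal

variable {K : Type*} [Field K] {G : Type*} [CommGroup G]

lemma mem_tClosure_iff {S : Set (FL K G)} {a : FL K G} :
    a ∈ tClosure K G S ↔ ∀ I : LieIdeal K (FL K G), IsTIdeal K G I → S ⊆ I → a ∈ I := by
  rw [tClosure, ← LieSubmodule.mem_coe, LieSubmodule.coe_sInf]
  simp

lemma subset_tClosure (S : Set (FL K G)) : S ⊆ tClosure K G S :=
  fun _ ha => mem_tClosure_iff.2 fun _ _ hS => hS ha

lemma tClosure_le {S : Set (FL K G)} {I : LieIdeal K (FL K G)} (hI : IsTIdeal K G I)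
    (hS : S ⊆ I) : tClosure K G S ≤ I :=
  sInf_le ⟨hI, hS⟩

lemma tClosure_mono {S S' : Set (FL K G)} (h : S ⊆ S') : tClosure K G S ≤ tClosure K G S' :=
  sInf_le_sInf fun _ hI => ⟨hI.1, h.trans hI.2⟩

lemma isTIdeal_tClosure (S : Set (FL K G)) : IsTIdeal K G (tClosure K G S) :=
  fun φ hφ _ ha => mem_tClosure_iff.2 fun I hI hS => hI φ hφ _ (mem_tClosure_iff.1 ha I hI hS)

lemma IsTIdeal.sup {I J : LieIdeal K (FL K G)} (hI : IsTIdeal K G I) (hJ : IsTIdeal K G J) :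
    IsTIdeal K G (I ⊔ J) := by
  intro φ hφ a ha
  obtain ⟨b, hb, c, hc, rfl⟩ := LieSubmodule.mem_sup _ _ _ |>.1 ha
  exact LieSubmodule.mem_sup _ _ _ |>.2 ⟨φ b, hI φ hφ b hb, φ c, hJ φ hφ c hc, (map_add φ b c).symm⟩

lemma tClosure_sup_eq_of_subset {F C : Set (FL K G)} {I : LieIdeal K (FL K G)}
    (hI : IsTIdeal K G I) (hFC : F ⊆ C) (hC : ∀ c ∈ C, c ∈ tClosure K G F ⊔ I) :
    tClosure K G F ⊔ I = tClosure K G C ⊔ I :=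
  le_antisymm (sup_le_sup_right (tClosure_mono hFC) I)
    (sup_le (tClosure_le ((isTIdeal_tClosure F).sup hI) hC) le_sup_right)

end TIdeal

section GradedIdentities

variable {K : Type*} [Field K] {G : Type*} [CommGroup G]
  {A : Type*} [LieRing A] [LieAlgebra K A] {Γ : G → Submodule K A}

lemma IsHom.apply_mem
    (hΓ : ∀ {g h : G} {a b : A}, a ∈ Γ g → b ∈ Γ h → ⁅a, b⁆ ∈ Γ (g * h))
    {ψ : FL K G →ₗ⁅K⁆ A} (hψ : ∀ (i : ℕ) (g : G), ψ (of K (i, g)) ∈ Γ g)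
    {g : G} {a : FL K G} (ha : IsHom K G g a) : ψ a ∈ Γ g := by
  induction ha with
  | var i g => exact hψ i g
  | zero g => simp
  | add _ _ iha ihb => simpa using add_mem iha ihb
  | smul c _ ih => simpa using Submodule.smul_mem _ c ih
  | lie _ _ iha ihb => simpa using hΓ iha ihb

lemma isTIdeal_gradedIdeal
    (hΓ : ∀ {g h : G} {a b : A}, a ∈ Γ g → b ∈ Γ h → ⁅a, b⁆ ∈ Γ (g * h)) :
    IsTIdeal K G (gradedIdeal K G A Γ) :=
  fun φ hφ _ hf ψ hψ => hf (ψ.comp φ) fun i g => (hφ i g).apply_mem hΓ hψ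

lemma lie_yVar_mem_gradedIdeal (hΓ : ∀ a ∈ Γ 1, ∀ b ∈ Γ 1, ⁅a, b⁆ = 0) (i j : ℕ) :
    ⁅yVar K G i, yVar K G j⁆ ∈ gradedIdeal K G A Γ :=
  fun ψ hψ => by rw [ψ.map_lie]; exact hΓ _ (hψ i 1) _ (hψ j 1)

end GradedIdentities

section UpperTriangular

variable {K : Type*} [Field K] {G : Type*} [CommGroup G]

lemma lie_mem_of_mem_span {L : Type*} [LieRing L] [LieAlgebra K L] {s t : Set L}
    {p : Submodule K L} (h : ∀ a ∈ s, ∀ b ∈ t, ⁅a, b⁆ ∈ p) {a b : L}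
    (ha : a ∈ Submodule.span K s) (hb : b ∈ Submodule.span K t) : ⁅a, b⁆ ∈ p := by
  let f : L →ₗ[K] L →ₗ[K] L := LieModule.toEnd K L L
  have hab : f a b ∈ Submodule.span K (Set.image2 (fun a b => f a b) s t) :=
    Submodule.map₂_span_span K f s t ▸ Submodule.apply_mem_map₂ f ha hb
  refine Submodule.span_le.2 ?_ hab
  rintro _ ⟨a, ha, b, hb, rfl⟩
  exact h a ha b hb

lemma E3_mul_E3 (i j p q : Fin 3) :
    E3 K i j * E3 K p q = if j = p then E3 K i q else 0 := by
  split_ifs with h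
  · subst h
    simp [E3]
  · simp [E3, h]

lemma lie_mem_utGrading (g h : G) {l l' : G} {a b : M3 K} (ha : a ∈ utGrading K G g h l)
    (hb : b ∈ utGrading K G g h l') : ⁅a, b⁆ ∈ utGrading K G g h (l * l') := by
  refine lie_mem_of_mem_span ?_ ha hb
  rintro _ (⟨rfl, rfl | rfl | rfl⟩ | ⟨rfl, rfl⟩ | ⟨rfl, rfl⟩ | ⟨rfl, rfl⟩)
    _ (⟨rfl, rfl | rfl | rfl⟩ | ⟨rfl, rfl⟩ | ⟨rfl, rfl⟩ | ⟨rfl, rfl⟩) <;>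
    simp only [Ring.lie_def, E3_mul_E3, Fin.isValue, Fin.reduceEq, ↓reduceIte, sub_self, sub_zero,
      zero_sub, neg_mem_iff, zero_mem, mul_one, one_mul]
  all_goals exact Submodule.subset_span (by simp [mul_comm])

lemma isDiag_E3_self (i : Fin 3) : (E3 K i i).IsDiag :=
  fun _ _ hpq => Matrix.single_apply_of_ne _ _ _ _ _ fun h => hpq (h.1 ▸ h.2)

lemma isDiag_of_mem_utGrading_one {g h : G} (hg : g ≠ 1) (hh : h ≠ 1) (hgh : g * h ≠ 1)
    {a : M3 K} (ha : a ∈ utGrading K G g h 1) : a.IsDiag := by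
  induction ha using Submodule.span_induction with
  | mem x hx =>
    obtain ⟨-, rfl | rfl | rfl⟩ | ⟨h1, -⟩ | ⟨h1, -⟩ | ⟨h1, -⟩ := hx
    any_goals exact isDiag_E3_self _
    exacts [(hg h1.symm).elim, (hh h1.symm).elim, (hgh h1.symm).elim]
  | zero => exact Matrix.isDiag_zero
  | add _ _ _ _ hx hy => exact hx.add hy
  | smul c _ _ hx => exact hx.smul c

lemma Matrix.IsDiag.lie_eq_zero {n : Type*} [Fintype n] [DecidableEq n] {a b : Matrix n n K}
    (ha : a.IsDiag) (hb : b.IsDiag) : ⁅a, b⁆ = 0 := by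
  rw [Ring.lie_def, ← ha.diagonal_diag, ← hb.diagonal_diag, Matrix.diagonal_mul_diagonal,
    Matrix.diagonal_mul_diagonal, sub_eq_zero]
  simp only [mul_comm]

lemma isTIdeal_IdUT3 (g h : G) : IsTIdeal K G (IdUT3 K G g h) :=
  isTIdeal_gradedIdeal (lie_mem_utGrading g h)

lemma lie_yVar_mem_IdUT3 {g h : G} (hg : g ≠ 1) (hh : h ≠ 1) (hgh : g * h ≠ 1) (i j : ℕ) :
    ⁅yVar K G i, yVar K G j⁆ ∈ IdUT3 K G g h :=
  lie_yVar_mem_gradedIdeal (fun _ ha _ hb =>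
    (isDiag_of_mem_utGrading_one hg hh hgh ha).lie_eq_zero
      (isDiag_of_mem_utGrading_one hg hh hgh hb)) i j

end UpperTriangular

section Relabel

variable (K : Type*) [Field K] (G : Type*) [CommGroup G]

open Classical in
noncomputable def relabelY (t : ℕ → ℕ) : FL K G →ₗ⁅K⁆ FL K G :=
  lift K fun p => if p.2 = 1 then of K (t p.1, 1) else of K p

variable {K G}

lemma relabelY_yVar (t : ℕ → ℕ) (i : ℕ) : relabelY K G t (yVar K G i) = yVar K G (t i) := by
  simp [relabelY, yVar]

lemma relabelY_of_ne_one (t : ℕ → ℕ) {i : ℕ} {g : G} (hg : g ≠ 1) :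
    relabelY K G t (of K (i, g)) = of K (i, g) := by
  simp [relabelY, hg]

lemma isGradedSubst_relabelY (t : ℕ → ℕ) : IsGradedSubst K G (relabelY K G t) := by
  intro i g
  by_cases hg : g = 1
  · subst hg
    change IsHom K G 1 (relabelY K G t (yVar K G i))
    rw [relabelY_yVar]
    exact .var _ _
  · rw [relabelY_of_ne_one t hg]
    exact .var _ _

lemma lnorm_mem_tClosure_sup_of_map_le {I : LieIdeal K (FL K G)}
    (hI : ∀ i j : ℕ, ⁅yVar K G i, yVar K G j⁆ ∈ I) {g : G} (hg : g ≠ 1) (i : ℕ)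
    {s s' : List ℕ} {t : ℕ → ℕ} (h : (s : Multiset ℕ).map t ≤ s') :
    lnorm K G (of K (i, g)) (s'.map (yVar K G)) ∈
      tClosure K G {lnorm K G (of K (i, g)) (s.map (yVar K G))} ⊔ I := by
  obtain ⟨u, hu⟩ := Multiset.le_iff_exists_add.1 h
  induction u using Quotient.inductionOn with | h u =>
  have hperm : s'.Perm (s.map t ++ u) := Multiset.coe_eq_coe.1 (by simpa using hu)
  set x := of K (i, g)
  have hsubst : relabelY K G t (lnorm K G x (s.map (yVar K G))) =
      lnorm K G x ((s.map t).map (yVar K G)) := by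
    rw [map_lnorm, relabelY_of_ne_one t hg, List.map_map, List.map_map]
    exact congrArg _ (List.map_congr_left fun m _ => relabelY_yVar t m)
  set f := lnorm K G x (s.map (yVar K G))
  have hT : lnorm K G (relabelY K G t f) (u.map (yVar K G)) ∈ tClosure K G {f} :=
    lnorm_mem (isTIdeal_tClosure {f} _ (isGradedSubst_relabelY t) f (subset_tClosure {f} rfl)) _
  rw [hsubst, ← lnorm_append, ← List.map_append] at hT
  have hId : lnorm K G x (s'.map (yVar K G)) - lnorm K G x ((s.map t ++ u).map (yVar K G)) ∈ I := by
    refine lnorm_sub_lnorm_mem_of_perm (hperm.map _) ?_ x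
    simp only [List.mem_map]
    rintro _ ⟨a, -, rfl⟩ _ ⟨b, -, rfl⟩
    exact hI a b
  exact (LieSubmodule.mem_sup _ _ _).2 ⟨_, hT, _, hId, by abel⟩

end Relabel

section Exponents

def iRun (p : ℕ → ℕ) : ℕ → List ℕ
  | 0 => []
  | n + 1 => iRun p n ++ List.replicate (p n) n

lemma yRun_eq_map_iRun (K : Type*) [Field K] (G : Type*) [CommGroup G] (p : ℕ → ℕ) (n : ℕ) :
    yRun K G p n = (iRun p n).map (yVar K G) := by
  induction n with
  | zero => rfl
  | succ n ih => simp [yRun, iRun, ih, yVar]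

/-- `ofMultiplicities [k₀, k₁, …]` is the multiset containing each `i` with multiplicity `kᵢ`. -/
def ofMultiplicities : List ℕ → Multiset ℕ
  | [] => 0
  | k :: E => Multiset.replicate k 0 + (ofMultiplicities E).map Nat.succ

lemma ofMultiplicities_append_singleton (E : List ℕ) (k : ℕ) :
    ofMultiplicities (E ++ [k]) = ofMultiplicities E + Multiset.replicate k E.length := by
  induction E with
  | nil => simp [ofMultiplicities]
  | cons a E ih => simp [ofMultiplicities, ih, Multiset.map_replicate, add_assoc]

lemma coe_iRun (p : ℕ → ℕ) (n : ℕ) :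
    (iRun p n : Multiset ℕ) = ofMultiplicities ((List.range n).map p) := by
  induction n with
  | zero => rfl
  | succ n ih =>
    rw [iRun, ← Multiset.coe_add, ih, List.range_succ, List.map_append, List.map_singleton,
      ofMultiplicities_append_singleton, Multiset.coe_replicate, List.length_map,
      List.length_range]

lemma List.SublistForall₂.exists_map_ofMultiplicities_le {E E' : List ℕ}
    (h : List.SublistForall₂ (· ≤ ·) E E') :
    ∃ t : ℕ → ℕ, (ofMultiplicities E).map t ≤ ofMultiplicities E' := by
  induction h with
  | nil => exact ⟨id, by simp [ofMultiplicities]⟩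
  | cons hab _ ih =>
    obtain ⟨t, ht⟩ := ih
    refine ⟨fun | 0 => 0 | i + 1 => t i + 1, ?_⟩
    simp only [ofMultiplicities, Multiset.map_add, Multiset.map_replicate]
    refine add_le_add (Multiset.replicate_mono 0 hab) ?_
    simpa [Multiset.map_map] using Multiset.map_le_map (f := Nat.succ) ht
  | cons_right _ ih =>
    obtain ⟨t, ht⟩ := ih
    refine ⟨Nat.succ ∘ t, ?_⟩
    rw [← Multiset.map_map]
    exact (Multiset.map_le_map ht).trans (Multiset.le_add_left _ _)

end Exponents

theorem Set.PartiallyWellOrderedOn.exists_finite_basis {α : Type*} {r : α → α → Prop}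
    {C : Set α} (h : C.PartiallyWellOrderedOn r) :
    ∃ F ⊆ C, F.Finite ∧ ∀ c ∈ C, ∃ f ∈ F, r f c := by
  by_contra! H
  obtain ⟨u, huC, hu⟩ := exists_seq_of_forall_finset_exists (· ∈ C) (fun a b => ¬ r a b)
    fun F hF => H F hF F.finite_toSet
  obtain ⟨m, n, hmn, hr⟩ := h.exists_lt huC
  exact hu m n hmn hr

section FiniteBasis

variable {K : Type*} [Field K] {G : Type*} [CommGroup G] {I : LieIdeal K (FL K G)}

lemma lnorm_yRun_mem_tClosure_sup (hI : ∀ i j : ℕ, ⁅yVar K G i, yVar K G j⁆ ∈ I) {g : G}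
    (hg : g ≠ 1) (i : ℕ) {n n' : ℕ} {k k' : ℕ → ℕ}
    (h : List.SublistForall₂ (· ≤ ·) ((List.range n).map k) ((List.range n').map k')) :
    lnorm K G (of K (i, g)) (yRun K G k' n') ∈
      tClosure K G {lnorm K G (of K (i, g)) (yRun K G k n)} ⊔ I := by
  obtain ⟨t, ht⟩ := h.exists_map_ofMultiplicities_le
  rw [yRun_eq_map_iRun, yRun_eq_map_iRun]
  exact lnorm_mem_tClosure_sup_of_map_le hI hg i (by rwa [coe_iRun, coe_iRun])

lemma partiallyWellOrderedOn_lnorm_yRun (hI : ∀ i j : ℕ, ⁅yVar K G i, yVar K G j⁆ ∈ I)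
    {g : G} (hg : g ≠ 1) (i : ℕ) {C : Set (FL K G)}
    (hC : C ⊆ {f | ∃ (n : ℕ) (k : ℕ → ℕ), f = lnorm K G (of K (i, g)) (yRun K G k n)}) :
    C.PartiallyWellOrderedOn fun f c => c ∈ tClosure K G {f} ⊔ I := by
  rw [Set.partiallyWellOrderedOn_iff_exists_lt]
  intro u hu
  choose n k hk using fun m => hC (hu m)
  have higman := (Set.IsPWO.of_linearOrder (Set.univ : Set ℕ)).partiallyWellOrderedOn_sublistForall₂
    (· ≤ ·)
  obtain ⟨a, b, hab, hemb⟩ := higman.exists_lt (f := fun m => (List.range (n m)).map (k m))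
    fun _ _ _ => Set.mem_univ _
  refine ⟨a, b, hab, ?_⟩
  rw [hk a, hk b]
  exact lnorm_yRun_mem_tClosure_sup hI hg i hemb

end FiniteBasis

/-- **Lemma.** For any subset `C` of the set of commutators
`[x_g, y₁^{(k₁)}, …, y_n^{(k_n)}]`, `n ≥ 0`, `kᵢ ≥ 0`, there are finitely many
`f₁, …, f_s ∈ C` with
`⟨f₁,…,f_s⟩^{T_G} + Id_G(UT₃⁽⁻⁾,Γ(e₁,e₂)) = ⟨C⟩^{T_G} + Id_G(UT₃⁽⁻⁾,Γ(e₁,e₂))`. -/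
theorem stmt4 (K : Type*) [Field K] (g : Gu) (hg : g ∈ ({e1, e2, e1 * e2} : Set Gu))
    (C : Set (FL K Gu))
    (hC : C ⊆ {f | ∃ (n : ℕ) (k : ℕ → ℕ), f = lnorm K Gu (of K (0, g)) (yRun K Gu k n)}) :
    ∃ F : Set (FL K Gu), F ⊆ C ∧ F.Finite ∧
      tClosure K Gu F ⊔ IdUT3 K Gu e1 e2 = tClosure K Gu C ⊔ IdUT3 K Gu e1 e2 := by
  have hg1 : g ≠ 1 := by
    simp only [Set.mem_insert_iff, Set.mem_singleton_iff] at hg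
    rcases hg with rfl | rfl | rfl <;> decide
  have hI := lie_yVar_mem_IdUT3 (K := K) (g := e1) (h := e2) (by decide) (by decide) (by decide)
  obtain ⟨F, hFC, hF, hbasis⟩ :=
    (partiallyWellOrderedOn_lnorm_yRun hI hg1 0 hC).exists_finite_basis
  refine ⟨F, hFC, hF, tClosure_sup_eq_of_subset (isTIdeal_IdUT3 e1 e2) hFC fun c hc => ?_⟩
  obtain ⟨f, hf, hfc⟩ := hbasis c hc
  exact sup_le_sup_right (tClosure_mono (Set.singleton_subset_iff.2 hf)) _ hfc
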